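/- For every w ∈ ℝ^{p(p-1)/2} and p ≥ 2, ‖Lw‖_F² ≤ 2p·‖w‖², i.e., the composition L*∘L satisfies ⟨w, L*(Lw)⟩ ≤ 2p‖w‖². -/
import Mathlib


open Matrix Finset

open Finset in
/-- Index map of Definition 1 (0-indexed): the pair `(i, j)` with `i > j`
(0-indexed) is sent to `k = (i - j - 1) + j*(2p - j - 1)/2`, which is the
0-indexed version of `k = (i' - j') + (j' - 1)*(2p - j')/2` for 1-indexed
`i' = i + 1`, `j' = j + 1`. -/
def lapIdx (p i j : ℕ) : ℕ := (i - j - 1) + j * (2 * p - j - 1) / 2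

/-- Extension of `w : Fin (p(p-1)/2) → ℝ` to `ℕ` by zero. -/
def wExt (p : ℕ) (w : Fin (p * (p - 1) / 2) → ℝ) (k : ℕ) : ℝ :=
  if h : k < p * (p - 1) / 2 then w ⟨k, h⟩ else 0

/-- The graph Laplacian operator `L` of Definition 1:
`[Lw]_{ij} = -w_{lapIdx p i j}` for `i > j`, symmetric for `i < j`, and
`[Lw]_{ii} = -∑_{j ≠ i} [Lw]_{ij}`. -/
def Lop (p : ℕ) (w : Fin (p * (p - 1) / 2) → ℝ) : Matrix (Fin p) (Fin p) ℝ :=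
  Matrix.of fun i j =>
    if i = j then
      ∑ l ∈ Finset.univ.filter (fun l => l ≠ i),
        wExt p w (lapIdx p (max (i : ℕ) (l : ℕ)) (min (i : ℕ) (l : ℕ)))
    else - wExt p w (lapIdx p (max (i : ℕ) (j : ℕ)) (min (i : ℕ) (j : ℕ)))

/-- The adjoint operator `L*` of Lemma 1:
`[L*Y]_k = Y_{ii} - Y_{ij} - Y_{ji} + Y_{jj}` where `(i, j)` is the unique
pair with `i > j` and `lapIdx p i j = k`. -/
def Ladj (p : ℕ) (Y : Matrix (Fin p) (Fin p) ℝ) : Fin (p * (p - 1) / 2) → ℝ :=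
  fun k => ∑ i : Fin p, ∑ j : Fin p,
    if (j : ℕ) < (i : ℕ) ∧ lapIdx p (i : ℕ) (j : ℕ) = (k : ℕ)
    then Y i i - Y i j - Y j i + Y j j else 0

private def fIdx (p j : ℕ) : ℕ := j * (2 * p - j - 1) / 2

private lemma two_fIdx (p j : ℕ) : 2 * fIdx p j = j * (2 * p - j - 1) := by
  have hev : 2 ∣ j * (2 * p - j - 1) := by
    rcases Nat.even_or_odd j with he | ho
    · exact Dvd.dvd.mul_right he.two_dvd _
    · have h2 : 2 ∣ (2 * p - j - 1) := by
        have := Nat.odd_iff.mp ho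
        omega
      exact Dvd.dvd.mul_left h2 _
  unfold fIdx
  exact Nat.mul_div_cancel' hev

private lemma fIdx_succ (p j : ℕ) (h : j + 1 ≤ p) :
    fIdx p (j + 1) = fIdx p j + (p - 1 - j) := by
  obtain ⟨a, rfl⟩ : ∃ a, p = j + 1 + a := ⟨p - j - 1, by omega⟩
  have h1 := two_fIdx (j + 1 + a) j
  have h2 := two_fIdx (j + 1 + a) (j + 1)
  have e1 : 2 * (j + 1 + a) - j - 1 = j + 2 * a + 1 := by omega
  have e2 : 2 * (j + 1 + a) - (j + 1) - 1 = j + 2 * a := by omega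
  rw [e1] at h1
  rw [e2] at h2
  have key : (j + 1) * (j + 2 * a) = j * (j + 2 * a + 1) + 2 * a := by ring
  omega

private lemma fIdx_mono (p : ℕ) : ∀ j j', j ≤ j' → j' ≤ p → fIdx p j ≤ fIdx p j' := by
  intro j j' h hp
  induction j' with
  | zero =>
    obtain rfl : j = 0 := by omega
    exact le_rfl
  | succ n ih =>
    rcases Nat.lt_or_ge j (n + 1) with hl | hg
    · have h1 : fIdx p j ≤ fIdx p n := ih (by omega) (by omega)
      rw [fIdx_succ p n (by omega)]
      omega
    · obtain rfl : j = n + 1 := by omega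
      exact le_rfl

private lemma lapIdx_eq (p i j : ℕ) : lapIdx p i j = (i - j - 1) + fIdx p j := rfl

private lemma lapIdx_inj (p : ℕ) {i j i' j' : ℕ} (hj : j < i) (hi : i < p)
    (hj' : j' < i') (hi' : i' < p)
    (h : lapIdx p i j = lapIdx p i' j') : i = i' ∧ j = j' := by
  have key : ∀ {a b a' b' : ℕ}, b < a → a < p → b' < a' → a' < p →
      b < b' → lapIdx p a b < lapIdx p a' b' := by
    intro a b a' b' h1 h2 h3 h4 h5
    have hs : fIdx p (b + 1) = fIdx p b + (p - 1 - b) := fIdx_succ p b (by omega)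
    have hm : fIdx p (b + 1) ≤ fIdx p b' := fIdx_mono p _ _ (by omega) (by omega)
    rw [lapIdx_eq, lapIdx_eq]
    omega
  rcases lt_trichotomy j j' with hlt | heq | hgt
  · exact absurd h (by have := key hj hi hj' hi' hlt; omega)
  · subst heq
    rw [lapIdx_eq, lapIdx_eq] at h
    constructor <;> omega
  · exact absurd h (by have := key hj' hi' hj hi hgt; omega)

private lemma sum_pairs_le (p : ℕ) (w : Fin (p * (p - 1) / 2) → ℝ) :
    ∑ q ∈ (univ : Finset (Fin p × Fin p)).filter (fun q => (q.2 : ℕ) < (q.1 : ℕ)),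
      (wExt p w (lapIdx p (q.1 : ℕ) (q.2 : ℕ)))^2 ≤ ∑ k, (w k)^2 := by
  classical
  set s := (univ : Finset (Fin p × Fin p)).filter (fun q => (q.2 : ℕ) < (q.1 : ℕ)) with hs
  set g : Fin p × Fin p → ℕ := fun q => lapIdx p (q.1 : ℕ) (q.2 : ℕ) with hg
  have hinj : Set.InjOn g s := by
    intro q hq q' hq' h
    simp only [hs, mem_coe, mem_filter] at hq hq'
    have := lapIdx_inj p hq.2 q.1.isLt hq'.2 q'.1.isLt h
    exact Prod.ext (Fin.ext this.1) (Fin.ext this.2)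
  have himg : ∑ q ∈ s, (wExt p w (g q))^2 = ∑ n ∈ s.image g, (wExt p w n)^2 :=
    (Finset.sum_image (f := fun n => (wExt p w n)^2)
      (fun a ha b hb h => hinj ha hb h)).symm
  rw [hg] at himg
  simp only at himg
  rw [himg]
  have h1 : ∑ n ∈ s.image g, (wExt p w n)^2
      ≤ ∑ n ∈ (s.image g) ∪ Finset.range (p * (p - 1) / 2), (wExt p w n)^2 :=
    Finset.sum_le_sum_of_subset_of_nonneg Finset.subset_union_left
      (fun n _ _ => sq_nonneg _)
  have h2 : ∑ n ∈ (s.image g) ∪ Finset.range (p * (p - 1) / 2), (wExt p w n)^2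
      = ∑ n ∈ Finset.range (p * (p - 1) / 2), (wExt p w n)^2 := by
    refine (Finset.sum_subset Finset.subset_union_right ?_).symm
    intro n _ hn
    have hnN : ¬ n < p * (p - 1) / 2 := by simpa using hn
    simp [wExt, hnN]
  have h3 : ∑ n ∈ Finset.range (p * (p - 1) / 2), (wExt p w n)^2 = ∑ k, (w k)^2 := by
    rw [← Fin.sum_univ_eq_sum_range]
    refine Finset.sum_congr rfl fun k _ => ?_
    simp [wExt, k.isLt]
  calc _ ≤ _ := h1
    _ = _ := h2
    _ = _ := h3

/-- for every `w`, `‖Lw‖_F² ≤ 2p·‖w‖²`; equivalently the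
composition `L* ∘ L` satisfies `⟨w, L*(Lw)⟩ ≤ 2p‖w‖²`. -/
theorem lop_norm_sq_bound (p : ℕ) (hp : 2 ≤ p)
    (w : Fin (p * (p - 1) / 2) → ℝ) :
    (∑ i : Fin p, ∑ j : Fin p, (Lop p w i j) ^ 2) ≤
      2 * p * ∑ k, (w k) ^ 2 ∧
    (∑ k, w k * Ladj p (Lop p w) k) ≤ 2 * p * ∑ k, (w k) ^ 2 := by
  classical
  set Y := Lop p w with hYdef
  set a : Fin p → Fin p → ℝ :=
    fun i j => wExt p w (lapIdx p (max (i : ℕ) (j : ℕ)) (min (i : ℕ) (j : ℕ))) with ha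
  have hasymm : ∀ i j, a i j = a j i := by
    intro i j
    simp only [ha]
    rw [max_comm, min_comm]
  have hYoff : ∀ i j : Fin p, i ≠ j → Y i j = - a i j := by
    intro i j h
    simp [hYdef, Lop, ha, h]
  have hYdiag : ∀ i : Fin p, Y i i = ∑ l ∈ univ.filter (fun l => l ≠ i), a i l := by
    intro i
    simp [hYdef, Lop, ha]
  -- row split
  have split : ∀ i : Fin p, ∑ j : Fin p, (Y i j)^2
      = (Y i i)^2 + ∑ j ∈ univ.filter (fun j => j ≠ i), (a i j)^2 := by
    intro i
    rw [← Finset.add_sum_erase univ (fun j => (Y i j)^2) (mem_univ i)]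
    congr 1
    rw [Finset.filter_ne']
    refine Finset.sum_congr rfl fun j hj => ?_
    have hji : j ≠ i := Finset.ne_of_mem_erase hj
    rw [hYoff i j (Ne.symm hji), neg_sq]
  -- pointwise splitting of off-diagonal terms by trichotomy
  have pt : ∀ i j : Fin p, (if j ≠ i then (a i j)^2 else 0)
      = (if (j : ℕ) < (i : ℕ) then (wExt p w (lapIdx p (i : ℕ) (j : ℕ)))^2 else 0)
        + (if (i : ℕ) < (j : ℕ) then (wExt p w (lapIdx p (j : ℕ) (i : ℕ)))^2 else 0) := by
    intro i j
    rcases lt_trichotomy ((j : ℕ)) ((i : ℕ)) with h | h | h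
    · have hne : j ≠ i := fun e => by simp [e] at h
      have haij : a i j = wExt p w (lapIdx p (i : ℕ) (j : ℕ)) := by
        simp only [ha]
        rw [max_eq_left h.le, min_eq_right h.le]
      rw [if_pos hne, if_pos h, if_neg (by omega), haij, add_zero]
    · have : j = i := Fin.ext h
      simp [this]
    · have hne : j ≠ i := fun e => by simp [e] at h
      have haij : a i j = wExt p w (lapIdx p (j : ℕ) (i : ℕ)) := by
        simp only [ha]
        rw [max_eq_right h.le, min_eq_left h.le]
      rw [if_pos hne, if_pos h, if_neg (by omega), haij, zero_add]
  -- the strict lower-triangle sum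
  set S := ∑ q ∈ (univ : Finset (Fin p × Fin p)).filter (fun q => (q.2 : ℕ) < (q.1 : ℕ)),
      (wExt p w (lapIdx p (q.1 : ℕ) (q.2 : ℕ)))^2 with hS
  have hSle : S ≤ ∑ k, (w k)^2 := sum_pairs_le p w
  have hSnn : 0 ≤ S := Finset.sum_nonneg fun _ _ => sq_nonneg _
  have hSA : S = ∑ i : Fin p, ∑ j : Fin p,
      (if (j : ℕ) < (i : ℕ) then (wExt p w (lapIdx p (i : ℕ) (j : ℕ)))^2 else 0) := by
    rw [hS, Finset.sum_filter]
    exact Fintype.sum_prod_type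
      (f := fun q : Fin p × Fin p => if (q.2 : ℕ) < (q.1 : ℕ) then (wExt p w (lapIdx p (q.1 : ℕ) (q.2 : ℕ)))^2 else 0)
  -- total off-diagonal sum equals 2S
  have offT : ∑ i : Fin p, ∑ j ∈ univ.filter (fun j => j ≠ i), (a i j)^2 = 2 * S := by
    have e1 : ∀ i : Fin p, ∑ j ∈ univ.filter (fun j => j ≠ i), (a i j)^2
        = ∑ j : Fin p, (if j ≠ i then (a i j)^2 else 0) :=
      fun i => Finset.sum_filter _ _
    calc ∑ i : Fin p, ∑ j ∈ univ.filter (fun j => j ≠ i), (a i j)^2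
        = ∑ i : Fin p, ∑ j : Fin p, (if j ≠ i then (a i j)^2 else 0) := by
          exact Finset.sum_congr rfl fun i _ => e1 i
      _ = ∑ i : Fin p, ∑ j : Fin p,
            ((if (j : ℕ) < (i : ℕ) then (wExt p w (lapIdx p (i : ℕ) (j : ℕ)))^2 else 0)
              + (if (i : ℕ) < (j : ℕ) then (wExt p w (lapIdx p (j : ℕ) (i : ℕ)))^2 else 0)) := by
          exact Finset.sum_congr rfl fun i _ => Finset.sum_congr rfl fun j _ => pt i j
      _ = (∑ i : Fin p, ∑ j : Fin p,
            (if (j : ℕ) < (i : ℕ) then (wExt p w (lapIdx p (i : ℕ) (j : ℕ)))^2 else 0))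
          + ∑ i : Fin p, ∑ j : Fin p,
            (if (i : ℕ) < (j : ℕ) then (wExt p w (lapIdx p (j : ℕ) (i : ℕ)))^2 else 0) := by
          rw [← Finset.sum_add_distrib]
          exact Finset.sum_congr rfl fun i _ => Finset.sum_add_distrib
      _ = S + S := by
          rw [← hSA]
          congr 1
          rw [Finset.sum_comm, hSA]
      _ = 2 * S := by ring
  -- Cauchy–Schwarz on each diagonal entry
  have cs : ∀ i : Fin p, (Y i i)^2
      ≤ ((p : ℝ) - 1) * ∑ j ∈ univ.filter (fun j => j ≠ i), (a i j)^2 := by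
    intro i
    have hcard : ((univ.filter (fun j => j ≠ i)) : Finset (Fin p)).card = p - 1 := by
      rw [Finset.filter_ne', Finset.card_erase_of_mem (mem_univ i), Finset.card_univ,
        Fintype.card_fin]
    have := sq_sum_le_card_mul_sum_sq
      (s := univ.filter (fun j => j ≠ i)) (f := fun j => a i j)
    rw [hYdiag i]
    calc (∑ l ∈ univ.filter (fun l => l ≠ i), a i l)^2
        ≤ ((univ.filter (fun j => j ≠ i)).card : ℝ)
            * ∑ j ∈ univ.filter (fun j => j ≠ i), (a i j)^2 := this
      _ = ((p : ℝ) - 1) * ∑ j ∈ univ.filter (fun j => j ≠ i), (a i j)^2 := by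
          rw [hcard, Nat.cast_sub (by omega), Nat.cast_one]
  -- Part 1
  have total_eq : ∑ i : Fin p, ∑ j : Fin p, (Y i j)^2
      = (∑ i : Fin p, (Y i i)^2)
        + ∑ i : Fin p, ∑ j ∈ univ.filter (fun j => j ≠ i), (a i j)^2 := by
    rw [← Finset.sum_add_distrib]
    exact Finset.sum_congr rfl fun i _ => split i
  have part1 : (∑ i : Fin p, ∑ j : Fin p, (Y i j)^2) ≤ 2 * p * ∑ k, (w k)^2 := by
    have hdiag : ∑ i : Fin p, (Y i i)^2 ≤ ((p : ℝ) - 1) * (2 * S) := by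
      calc ∑ i : Fin p, (Y i i)^2
          ≤ ∑ i : Fin p, ((p : ℝ) - 1) * ∑ j ∈ univ.filter (fun j => j ≠ i), (a i j)^2 :=
            Finset.sum_le_sum fun i _ => cs i
        _ = ((p : ℝ) - 1) * (2 * S) := by rw [← Finset.mul_sum, offT]
    have hp' : (2 : ℝ) ≤ (p : ℝ) := by exact_mod_cast hp
    rw [total_eq, offT]
    nlinarith [mul_le_mul_of_nonneg_left hSle (by positivity : (0 : ℝ) ≤ 2 * (p : ℝ))]
  refine ⟨part1, ?_⟩
  -- Part 2: the quadratic form equals the Frobenius norm squared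
  have step1 : ∑ k, w k * Ladj p Y k
      = ∑ i : Fin p, ∑ j : Fin p,
          (if (j : ℕ) < (i : ℕ) then
            wExt p w (lapIdx p (i : ℕ) (j : ℕ)) * (Y i i - Y i j - Y j i + Y j j) else 0) := by
    simp only [Ladj, Finset.mul_sum, mul_ite, mul_zero]
    rw [Finset.sum_comm]
    refine Finset.sum_congr rfl fun i _ => ?_
    rw [Finset.sum_comm]
    refine Finset.sum_congr rfl fun j _ => ?_
    by_cases hij : (j : ℕ) < (i : ℕ)
    · rw [if_pos hij]
      by_cases hlt : lapIdx p (i : ℕ) (j : ℕ) < p * (p - 1) / 2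
      · rw [Finset.sum_eq_single (⟨lapIdx p (i : ℕ) (j : ℕ), hlt⟩ : Fin (p * (p - 1) / 2))]
        · rw [if_pos ⟨hij, rfl⟩]
          congr 1
          simp [wExt, hlt]
        · intro k _ hk
          rw [if_neg]
          rintro ⟨-, hkk⟩
          exact hk (Fin.ext hkk.symm)
        · intro h
          exact absurd (mem_univ _) h
      · have hz : wExt p w (lapIdx p (i : ℕ) (j : ℕ)) = 0 := by simp [wExt, hlt]
        rw [hz, zero_mul]
        refine Finset.sum_eq_zero fun k _ => ?_
        rw [if_neg]
        rintro ⟨-, hkk⟩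
        exact hlt (hkk ▸ k.isLt)
    · rw [if_neg hij]
      refine Finset.sum_eq_zero fun k _ => ?_
      rw [if_neg]
      rintro ⟨h1, -⟩
      exact hij h1
  -- rewrite the summand for j < i
  have step2 : ∀ i j : Fin p, (j : ℕ) < (i : ℕ) →
      wExt p w (lapIdx p (i : ℕ) (j : ℕ)) * (Y i i - Y i j - Y j i + Y j j)
      = a i j * (Y i i + Y j j) + 2 * (a i j)^2 := by
    intro i j h
    have hne : i ≠ j := fun e => by simp [e] at h
    have haij : a i j = wExt p w (lapIdx p (i : ℕ) (j : ℕ)) := by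
      simp only [ha]
      rw [max_eq_left h.le, min_eq_right h.le]
    rw [hYoff i j hne, hYoff j i (Ne.symm hne), hasymm j i, ← haij]
    ring
  -- the cross term equals the sum of squared diagonal entries
  have cross : ∑ i : Fin p, ∑ j : Fin p,
      (if (j : ℕ) < (i : ℕ) then a i j * (Y i i + Y j j) else 0)
      = ∑ i : Fin p, (Y i i)^2 := by
    have e1 : ∀ i j : Fin p, (if (j : ℕ) < (i : ℕ) then a i j * (Y i i + Y j j) else 0)
        = (if (j : ℕ) < (i : ℕ) then a i j * Y i i else 0)
          + (if (j : ℕ) < (i : ℕ) then a i j * Y j j else 0) := by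
      intro i j
      by_cases h : (j : ℕ) < (i : ℕ) <;> simp [h] <;> ring
    have swap2 : ∑ i : Fin p, ∑ j : Fin p, (if (j : ℕ) < (i : ℕ) then a i j * Y j j else 0)
        = ∑ i : Fin p, ∑ j : Fin p, (if (i : ℕ) < (j : ℕ) then a i j * Y i i else 0) := by
      rw [Finset.sum_comm]
      exact Finset.sum_congr rfl fun i _ => Finset.sum_congr rfl fun j _ => by
        by_cases h : (i : ℕ) < (j : ℕ)
        · rw [if_pos h, if_pos h, hasymm]
        · rw [if_neg h, if_neg h]
    calc ∑ i : Fin p, ∑ j : Fin p, (if (j : ℕ) < (i : ℕ) then a i j * (Y i i + Y j j) else 0)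
        = (∑ i : Fin p, ∑ j : Fin p, (if (j : ℕ) < (i : ℕ) then a i j * Y i i else 0))
          + ∑ i : Fin p, ∑ j : Fin p, (if (j : ℕ) < (i : ℕ) then a i j * Y j j else 0) := by
          rw [← Finset.sum_add_distrib]
          refine Finset.sum_congr rfl fun i _ => ?_
          rw [← Finset.sum_add_distrib]
          exact Finset.sum_congr rfl fun j _ => e1 i j
      _ = ∑ i : Fin p, ∑ j : Fin p,
            ((if (j : ℕ) < (i : ℕ) then a i j * Y i i else 0)
              + (if (i : ℕ) < (j : ℕ) then a i j * Y i i else 0)) := by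
          rw [swap2, ← Finset.sum_add_distrib]
          exact Finset.sum_congr rfl fun i _ => Finset.sum_add_distrib.symm
      _ = ∑ i : Fin p, ∑ j : Fin p, (if j ≠ i then a i j * Y i i else 0) := by
          refine Finset.sum_congr rfl fun i _ => Finset.sum_congr rfl fun j _ => ?_
          rcases lt_trichotomy ((j : ℕ)) ((i : ℕ)) with h | h | h
          · rw [if_pos h, if_neg (by omega), if_pos (fun e => by simp [e] at h), add_zero]
          · have : j = i := Fin.ext h
            simp [this]
          · rw [if_neg (by omega), if_pos h, if_pos (fun e => by simp [e] at h), zero_add]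
      _ = ∑ i : Fin p, (Y i i)^2 := by
          refine Finset.sum_congr rfl fun i _ => ?_
          rw [← Finset.sum_filter, ← Finset.sum_mul, ← hYdiag i]
          ring
  -- squared term equals the off-diagonal total
  have sqterm : ∑ i : Fin p, ∑ j : Fin p,
      (if (j : ℕ) < (i : ℕ) then 2 * (a i j)^2 else 0) = 2 * S := by
    have e2 : ∀ i j : Fin p, (if (j : ℕ) < (i : ℕ) then 2 * (a i j)^2 else 0)
        = 2 * (if (j : ℕ) < (i : ℕ) then (wExt p w (lapIdx p (i : ℕ) (j : ℕ)))^2 else 0) := by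
      intro i j
      by_cases h : (j : ℕ) < (i : ℕ)
      · have haij : a i j = wExt p w (lapIdx p (i : ℕ) (j : ℕ)) := by
          simp only [ha]
          rw [max_eq_left h.le, min_eq_right h.le]
        rw [if_pos h, if_pos h, haij]
      · rw [if_neg h, if_neg h, mul_zero]
    calc ∑ i : Fin p, ∑ j : Fin p, (if (j : ℕ) < (i : ℕ) then 2 * (a i j)^2 else 0)
        = ∑ i : Fin p, ∑ j : Fin p,
            2 * (if (j : ℕ) < (i : ℕ) then (wExt p w (lapIdx p (i : ℕ) (j : ℕ)))^2 else 0) := by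
          exact Finset.sum_congr rfl fun i _ => Finset.sum_congr rfl fun j _ => e2 i j
      _ = 2 * S := by
          rw [hSA]
          simp [Finset.mul_sum]
  have eq2 : ∑ k, w k * Ladj p Y k = ∑ i : Fin p, ∑ j : Fin p, (Y i j)^2 := by
    rw [step1]
    have : ∀ i j : Fin p,
        (if (j : ℕ) < (i : ℕ) then
          wExt p w (lapIdx p (i : ℕ) (j : ℕ)) * (Y i i - Y i j - Y j i + Y j j) else 0)
        = (if (j : ℕ) < (i : ℕ) then a i j * (Y i i + Y j j) else 0)
          + (if (j : ℕ) < (i : ℕ) then 2 * (a i j)^2 else 0) := by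
      intro i j
      by_cases h : (j : ℕ) < (i : ℕ)
      · rw [if_pos h, if_pos h, if_pos h, step2 i j h]
      · rw [if_neg h, if_neg h, if_neg h, add_zero]
    calc ∑ i : Fin p, ∑ j : Fin p,
          (if (j : ℕ) < (i : ℕ) then
            wExt p w (lapIdx p (i : ℕ) (j : ℕ)) * (Y i i - Y i j - Y j i + Y j j) else 0)
        = (∑ i : Fin p, ∑ j : Fin p, (if (j : ℕ) < (i : ℕ) then a i j * (Y i i + Y j j) else 0))
          + ∑ i : Fin p, ∑ j : Fin p, (if (j : ℕ) < (i : ℕ) then 2 * (a i j)^2 else 0) := by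
          rw [← Finset.sum_add_distrib]
          refine Finset.sum_congr rfl fun i _ => ?_
          rw [← Finset.sum_add_distrib]
          exact Finset.sum_congr rfl fun j _ => this i j
      _ = (∑ i : Fin p, (Y i i)^2) + 2 * S := by rw [cross, sqterm]
      _ = ∑ i : Fin p, ∑ j : Fin p, (Y i j)^2 := by rw [total_eq, offT]
  rw [eq2]
  exact part1
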